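/- Let 𝐯 be a binary sequence whose language is closed under the letter-exchange morphism E (E(0)=1, E(1)=0), and let 𝐮 = S(𝐯) be its first-difference sequence. Then a non-empty word w is a right special factor of 𝐯 if and only if S(w) is a right special factor of 𝐮. -/

import Mathlib

/-- The first-difference map on binary words:
`S(v₀v₁⋯vₙ) = u₀⋯u_{n-1}` with `uᵢ = vᵢ + v_{i+1} (mod 2)`. -/
def Smap (v : List (ZMod 2)) : List (ZMod 2) :=
  (List.range (v.length - 1)).map fun i => v.getD i 0 + v.getD (i + 1) 0

/-- `w` occurs in the sequence `u` at position `i`. -/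
def OccursAt (u : ℕ → ZMod 2) (w : List (ZMod 2)) (i : ℕ) : Prop :=
  ∀ k < w.length, w[k]? = some (u (i + k))

/-- `w` is a factor of the sequence `u`. -/
def IsFactor (u : ℕ → ZMod 2) (w : List (ZMod 2)) : Prop :=
  ∃ i, OccursAt u w i

/-- The first-difference map on binary sequences. -/
def SSeq (v : ℕ → ZMod 2) : ℕ → ZMod 2 := fun i => v i + v (i + 1)

/-- `w` is a right special factor of `u`: both `w0` and `w1` are factors. -/
def RightSpecial (u : ℕ → ZMod 2) (w : List (ZMod 2)) : Prop :=
  IsFactor u (w ++ [0]) ∧ IsFactor u (w ++ [1])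

/-!
Over `ZMod 2` the first-difference map `S` forgets exactly the first letter: words with the same
image differ by a constant, so they are equal or exchanged by `E`. Hence, when the language of `v`
is closed under `E`, a word is a factor of `v` iff its image is a factor of `S(v)`. Moreover
`S(wa) = S(w)b` with `b = last(w) + a`, and `a ↦ b` is a bijection of the alphabet, so the right
extensions of `w` in `v` correspond to those of `S(w)` in `S(v)`.
-/

lemma length_Smap (w : List (ZMod 2)) : (Smap w).length = w.length - 1 := by
  simp [Smap]

lemma getElem?_Smap {w : List (ZMod 2)} {k : ℕ} (hk : k < w.length - 1) :
    (Smap w)[k]? = some (w.getD k 0 + w.getD (k + 1) 0) := by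
  simp [Smap, hk]

lemma Smap_append_singleton (w : List (ZMod 2)) (hw : w ≠ []) (a : ZMod 2) :
    Smap (w ++ [a]) = Smap w ++ [w.getLast hw + a] := by
  obtain ⟨n, hn⟩ : ∃ n, w.length = n + 1 := Nat.exists_eq_succ_of_ne_zero (by simpa using hw)
  simp only [Smap, List.length_append, List.length_singleton, hn, Nat.add_sub_cancel,
    List.range_succ, List.map_append, List.map_cons, List.map_nil]
  congr 1
  · refine List.map_congr_left fun k hk => ?_
    rw [List.mem_range] at hk
    rw [List.getD_append _ _ _ _ (by omega), List.getD_append _ _ _ _ (by omega)]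
  · simp [List.getLast_eq_getElem, hn, List.getD_eq_getElem?_getD]

lemma rightSpecial_iff_forall {u : ℕ → ZMod 2} {w : List (ZMod 2)} :
    RightSpecial u w ↔ ∀ a, IsFactor u (w ++ [a]) :=
  (Fin.forall_fin_two (p := fun a : ZMod 2 => IsFactor u (w ++ [a]))).symm

lemma add_eq_add_zero_of_SSeq_eq {x y : ℕ → ZMod 2} {n : ℕ}
    (h : ∀ k < n, SSeq x k = SSeq y k) : ∀ k ≤ n, x k + y k = x 0 + y 0
  | 0, _ => rfl
  | k + 1, hk => by
    have ih := add_eq_add_zero_of_SSeq_eq h k (by omega)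
    have hstep : x k + x (k + 1) = y k + y (k + 1) := h k hk
    linear_combination (norm := skip) ih - hstep
    ring_nf
    reduce_mod_char

lemma occursAt_iff_getD {u : ℕ → ZMod 2} {w : List (ZMod 2)} {i : ℕ} :
    OccursAt u w i ↔ ∀ k < w.length, w.getD k 0 = u (i + k) := by
  refine forall₂_congr fun k hk => ?_
  simp [List.getD_eq_getElem?_getD, List.getElem?_eq_getElem hk]

lemma OccursAt.SSeq_Smap {v : ℕ → ZMod 2} {w : List (ZMod 2)} {i : ℕ} (h : OccursAt v w i) :
    OccursAt (SSeq v) (Smap w) i := by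
  intro k hk
  rw [length_Smap] at hk
  rw [getElem?_Smap hk, occursAt_iff_getD.mp h k (by omega),
    occursAt_iff_getD.mp h (k + 1) (by omega)]
  rfl

lemma OccursAt.exists_map_add_of_SSeq_Smap {v : ℕ → ZMod 2} {w : List (ZMod 2)} {i : ℕ}
    (h : OccursAt (SSeq v) (Smap w) i) : ∃ c, OccursAt v (w.map (· + c)) i := by
  have hS : ∀ k < w.length - 1,
      SSeq (fun k => w.getD k 0) k = SSeq (fun k => v (i + k)) k := by
    intro k hk
    have := h k (by rwa [length_Smap])
    rw [getElem?_Smap hk] at this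
    exact Option.some_inj.mp this
  refine ⟨w.getD 0 0 + v i, fun k hk => ?_⟩
  rw [List.length_map] at hk
  have hc := add_eq_add_zero_of_SSeq_eq hS k (by omega)
  simp only [List.getElem?_map, List.getElem?_eq_getElem hk, Option.map_some, Option.some_inj]
  rw [List.getD_eq_getElem _ _ hk, Nat.add_zero] at hc
  rw [← hc, CharTwo.add_cancel_left]

lemma IsFactor.of_map_add {v : ℕ → ZMod 2}
    (hE : ∀ w : List (ZMod 2), IsFactor v w → IsFactor v (w.map (· + 1)))
    {w : List (ZMod 2)} {c : ZMod 2} (h : IsFactor v (w.map (· + c))) : IsFactor v w := by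
  obtain rfl | rfl := (by decide : ∀ c : ZMod 2, c = 0 ∨ c = 1) c
  · simpa using h
  · simpa [Function.comp_def, CharTwo.add_cancel_right] using hE _ h

lemma isFactor_SSeq_Smap_iff {v : ℕ → ZMod 2}
    (hE : ∀ w : List (ZMod 2), IsFactor v w → IsFactor v (w.map (· + 1)))
    (w : List (ZMod 2)) : IsFactor (SSeq v) (Smap w) ↔ IsFactor v w := by
  refine ⟨fun ⟨i, hi⟩ => ?_, Exists.imp fun _ => OccursAt.SSeq_Smap⟩
  obtain ⟨c, hc⟩ := OccursAt.exists_map_add_of_SSeq_Smap hi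
  exact IsFactor.of_map_add hE ⟨i, hc⟩

/-- If the language of a binary sequence `v` is closed under the exchange of
letters, then a non-empty word `w` is right special in `v` iff `S(w)` is right
special in `S(v)`. -/
theorem rightSpecial_iff_Smap (v : ℕ → ZMod 2)
    (hE : ∀ w : List (ZMod 2), IsFactor v w → IsFactor v (w.map (· + 1)))
    (w : List (ZMod 2)) (hw : w ≠ []) :
    RightSpecial v w ↔ RightSpecial (SSeq v) (Smap w) := by
  rw [rightSpecial_iff_forall, rightSpecial_iff_forall,
    ← (Equiv.addLeft (w.getLast hw)).forall_congr_right
      (q := fun b => IsFactor (SSeq v) (Smap w ++ [b]))]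
  refine forall_congr' fun a => ?_
  rw [Equiv.coe_addLeft, ← Smap_append_singleton w hw, isFactor_SSeq_Smap_iff hE]
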